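/- arXiv:1003.4035 — 2 statements merged into one kernel-verified Lean document; each statement's English description precedes it below -/
import Mathlib

section
/- Let H: R^{2n} → R satisfy (H0)–(H2), let M > M*, and fix p ∈ R^{2n−ℓ} \ {0}. Then: (a) for each q ∈ R^ℓ there is exactly one s > 0 with H(s·p, q) = M; (b) consequently there exists a unique function σ: R^ℓ → (0,∞) with H(σ(q)·p, q) = M for all q, and this σ is C² and satisfies σ(q+m) = σ(q) for all q ∈ R^ℓ and m ∈ Z^ℓ. -/
/-!
Fix `q` and put `f(s) = H(s • p, q)`. Once `s ≥ s₀ = r / |p|`, hypothesis (H2) says that `f` is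
superhomogeneous: `f > 0` and `μ f(s) ≤ s f'(s)`. Hence `f' > 0` there, and
`f(s) - μ f(s₀) log s` is nondecreasing, so `f → ∞`; for `0 < s ≤ s₀` we have `f < M`. So `f = M`
has exactly one positive root `σ(q)`, and `f'(σ(q)) > 0`. The implicit function theorem, combined
with the global uniqueness of the root, shows that `σ` is `C²`; `ℤ^ℓ`-periodicity of `H` in `q`
passes to `σ`, again by uniqueness.
-/

noncomputable section
open scoped RealInnerProductSpace

/-- `ℝ^{2n}` as a Euclidean space. -/
abbrev E2 (n : ℕ) := EuclideanSpace ℝ (Fin (2*n))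

/-- The standard symplectic matrix `J` on `ℝ^{2n} = ℝ^n × ℝ^n`, `J(u,v) = (-v,u)`. -/
def Jsymp (n : ℕ) (x : E2 n) : E2 n :=
  WithLp.toLp 2 (fun i => if h : (i : ℕ) < n then -x ⟨(i : ℕ) + n, by omega⟩
           else x ⟨(i : ℕ) - n, by have := i.isLt; omega⟩)

/-- The vector `(0,m) ∈ ℝ^{2n-ℓ} × ℝ^ℓ` whose `q`-part (last `ℓ` coordinates) is the
integer vector `m ∈ ℤ^ℓ` and whose `p`-part vanishes. -/
def qVec (n l : ℕ) (m : Fin l → ℤ) : E2 n :=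
  WithLp.toLp 2 (fun i => if h : 2*n - l ≤ (i : ℕ) then
      (m ⟨(i : ℕ) - (2*n - l), by have := i.isLt; omega⟩ : ℝ) else 0)

/-- The vector `(p,0)`: projection of `x = (p,q)` onto the first `2n-ℓ` coordinates. -/
def projP (n l : ℕ) (x : E2 n) : E2 n := WithLp.toLp 2 (fun i => if (i : ℕ) < 2*n - l then x i else 0)

/-- `|p|` : the Euclidean norm of the first `2n-ℓ` coordinates of `x = (p,q)`. -/
def pnorm (n l : ℕ) (x : E2 n) : ℝ := ‖projP n l x‖

/-- Embedding of `ℝ^ℓ` into the last `ℓ` coordinates of `ℝ^{2n}` (the `q`-part). -/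
def qEmb (n l : ℕ) (q : EuclideanSpace ℝ (Fin l)) : E2 n :=
  WithLp.toLp 2 (fun i => if h : 2*n - l ≤ (i : ℕ) then
      q ⟨(i : ℕ) - (2*n - l), by have := i.isLt; omega⟩ else 0)

/-- An integer vector `m ∈ ℤ^ℓ` regarded as an element of `ℝ^ℓ`. -/
def intVec (l : ℕ) (m : Fin l → ℤ) : EuclideanSpace ℝ (Fin l) := WithLp.toLp 2 (fun i => (m i : ℝ))

open Filter Set Topology
open scoped ContDiff

theorem ContinuousLinearMap.isInvertible_of_apply_one_ne_zero {𝕜 : Type*}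
    [NontriviallyNormedField 𝕜] {L : 𝕜 →L[𝕜] 𝕜} (h : L 1 ≠ 0) : L.IsInvertible :=
  ⟨ContinuousLinearEquiv.unitsEquivAut 𝕜 (Units.mk0 (L 1) h), by ext; simp⟩

theorem isInvertible_fderiv_comp_inr_of_hasDerivAt {𝕜 E : Type*} [NontriviallyNormedField 𝕜]
    [NormedAddCommGroup E] [NormedSpace 𝕜 E] {f : E × 𝕜 → 𝕜} {x : E} {t a : 𝕜}
    (hf : DifferentiableAt 𝕜 f (x, t)) (ht : HasDerivAt (fun s => f (x, s)) a t) (ha : a ≠ 0) :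
    (fderiv 𝕜 f (x, t) ∘L .inr 𝕜 E 𝕜).IsInvertible := by
  refine ContinuousLinearMap.isInvertible_of_apply_one_ne_zero ?_
  have hpartial : HasDerivAt (fun s => f (x, s)) (fderiv 𝕜 f (x, t) (0, 1)) t :=
    hf.hasFDerivAt.comp_hasDerivAt t ((hasDerivAt_const t x).prodMk (hasDerivAt_id t))
  simpa [hpartial.unique ht] using ha

theorem contDiff_of_forall_apply_eq_of_unique {𝕜 : Type*} [RCLike 𝕜]
    {E₁ E₂ F : Type*} [NormedAddCommGroup E₁] [NormedSpace 𝕜 E₁] [CompleteSpace E₁]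
    [NormedAddCommGroup E₂] [NormedSpace 𝕜 E₂] [CompleteSpace E₂]
    [NormedAddCommGroup F] [NormedSpace 𝕜 F] [CompleteSpace F]
    {f : E₁ × E₂ → F} {ψ : E₁ → E₂} {U : Set E₂} {c : F} {k : ℕ∞ω}
    (hf : ContDiff 𝕜 k f) (hk : k ≠ 0) (hU : IsOpen U) (hψU : ∀ x, ψ x ∈ U)
    (hψ : ∀ x, f (x, ψ x) = c) (huniq : ∀ x y, y ∈ U → f (x, y) = c → y = ψ x)
    (hinv : ∀ x, (fderiv 𝕜 f (x, ψ x) ∘L .inr 𝕜 E₁ E₂).IsInvertible) : ContDiff 𝕜 k ψ := by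
  refine contDiff_iff_contDiffAt.2 fun x₀ => ?_
  have hfx₀ : ContDiffAt 𝕜 k f (x₀, ψ x₀) := hf.contDiffAt
  set φ := hfx₀.implicitFunction hk (hinv x₀)
  have hφ : ContDiffAt 𝕜 k φ x₀ := hfx₀.contDiffAt_implicitFunction hk (hinv x₀)
  have hφx₀ : φ x₀ = ψ x₀ := hfx₀.implicitFunction_apply_self hk (hinv x₀)
  have hφU : ∀ᶠ x in 𝓝 x₀, φ x ∈ U :=
    hφ.continuousAt.preimage_mem_nhds (hφx₀ ▸ hU.mem_nhds (hψU x₀))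
  refine hφ.congr_of_eventuallyEq ?_
  filter_upwards [hfx₀.eventually_apply_implicitFunction hk (hinv x₀), hφU] with x hx hxU
  exact (huniq x _ hxU (hx.trans (hψ x₀))).symm

section Superhomogeneous

variable {f f' : ℝ → ℝ} {μ s₀ : ℝ}

theorem pos_deriv_of_superhomogeneous (hμ : 0 < μ) (hs₀ : 0 < s₀)
    (hpos : ∀ s, s₀ ≤ s → 0 < f s) (hgrowth : ∀ s, s₀ ≤ s → μ * f s ≤ s * f' s)
    {s : ℝ} (hs : s₀ ≤ s) : 0 < f' s :=
  pos_of_mul_pos_right ((mul_pos hμ (hpos s hs)).trans_le (hgrowth s hs)) (hs₀.le.trans hs)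

theorem strictMonoOn_of_superhomogeneous (hμ : 0 < μ) (hs₀ : 0 < s₀)
    (hf : ∀ s, s₀ ≤ s → HasDerivAt f (f' s) s)
    (hpos : ∀ s, s₀ ≤ s → 0 < f s) (hgrowth : ∀ s, s₀ ≤ s → μ * f s ≤ s * f' s) :
    StrictMonoOn f (Ici s₀) :=
  strictMonoOn_of_hasDerivWithinAt_pos (convex_Ici s₀)
    (fun s hs => (hf s hs).continuousAt.continuousWithinAt)
    (fun s hs => (hf s (interior_subset hs)).hasDerivWithinAt)
    (fun _ hs => pos_deriv_of_superhomogeneous hμ hs₀ hpos hgrowth (interior_subset hs))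

theorem tendsto_atTop_of_superhomogeneous (hμ : 0 < μ) (hs₀ : 0 < s₀)
    (hf : ∀ s, s₀ ≤ s → HasDerivAt f (f' s) s)
    (hpos : ∀ s, s₀ ≤ s → 0 < f s) (hgrowth : ∀ s, s₀ ≤ s → μ * f s ≤ s * f' s) :
    Tendsto f atTop atTop := by
  set c := μ * f s₀
  have hc : 0 < c := mul_pos hμ (hpos s₀ le_rfl)
  have hmono : MonotoneOn (fun s => f s - c * Real.log s) (Ici s₀) := by
    have hderiv : ∀ s, s₀ ≤ s →
        HasDerivAt (fun s => f s - c * Real.log s) (f' s - c * s⁻¹) s := fun s hs =>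
      (hf s hs).sub ((Real.hasDerivAt_log (hs₀.trans_le hs).ne').const_mul c)
    refine monotoneOn_of_hasDerivWithinAt_nonneg (convex_Ici s₀)
      (fun s hs => (hderiv s hs).continuousAt.continuousWithinAt)
      (fun s hs => (hderiv s (interior_subset hs)).hasDerivWithinAt) fun s hs => ?_
    rw [interior_Ici, mem_Ioi] at hs
    have hfs : f s₀ ≤ f s :=
      (strictMonoOn_of_superhomogeneous hμ hs₀ hf hpos hgrowth).monotoneOn self_mem_Ici hs.le hs.le
    have hcs : c ≤ s * f' s := (mul_le_mul_of_nonneg_left hfs hμ.le).trans (hgrowth s hs.le)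
    rw [sub_nonneg, ← div_eq_mul_inv, div_le_iff₀ (hs₀.trans hs)]
    linarith
  have hlower : ∀ s, s₀ ≤ s → f s₀ - c * Real.log s₀ + c * Real.log s ≤ f s := fun s hs => by
    linarith [hmono self_mem_Ici hs hs]
  exact tendsto_atTop_mono' _ ((eventually_ge_atTop s₀).mono hlower)
    (tendsto_atTop_add_const_left _ _ (Real.tendsto_log_atTop.const_mul_atTop hc))

theorem existsUnique_pos_eq_of_superhomogeneous {M : ℝ} (hμ : 0 < μ) (hs₀ : 0 < s₀)
    (hf : ∀ s, s₀ ≤ s → HasDerivAt f (f' s) s)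
    (hpos : ∀ s, s₀ ≤ s → 0 < f s) (hgrowth : ∀ s, s₀ ≤ s → μ * f s ≤ s * f' s)
    (hsmall : ∀ s, 0 < s → s ≤ s₀ → f s < M) : ∃! s, 0 < s ∧ f s = M := by
  have habove : ∀ s, 0 < s → f s = M → s₀ ≤ s := fun s hs hfs =>
    (not_lt.1 fun h => (hsmall s hs h.le).ne hfs)
  obtain ⟨s₁, hMs₁, hs₁⟩ :=
    (((tendsto_atTop_of_superhomogeneous hμ hs₀ hf hpos hgrowth).eventually_ge_atTop M).and
      (eventually_ge_atTop s₀)).exists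
  obtain ⟨s, hs, hfs⟩ := intermediate_value_Icc hs₁
    (fun t ht => (hf t ht.1).continuousAt.continuousWithinAt) ⟨(hsmall s₀ hs₀ le_rfl).le, hMs₁⟩
  refine ⟨s, ⟨hs₀.trans_le hs.1, hfs⟩, fun t ⟨ht, hft⟩ => ?_⟩
  exact (strictMonoOn_of_superhomogeneous hμ hs₀ hf hpos hgrowth).injOn (habove t ht hft) hs.1
    (hft.trans hfs.symm)

end Superhomogeneous

theorem DifferentiableAt.hasDerivAt_comp_smul_add {E : Type*} [NormedAddCommGroup E]
    [InnerProductSpace ℝ E] [CompleteSpace E] {H : E → ℝ} {p x : E} {s : ℝ}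
    (hH : DifferentiableAt ℝ H (s • p + x)) :
    HasDerivAt (fun t : ℝ => H (t • p + x)) ⟪gradient H (s • p + x), p⟫ s := by
  have hline : HasDerivAt (fun t : ℝ => t • p + x) p s := by
    simpa using ((hasDerivAt_id s).smul_const p).add_const x
  exact hH.hasGradientAt.hasFDerivAt.comp_hasDerivAt s hline

section Coordinates

variable {n l : ℕ}

theorem projP_smul_add_qEmb {p : E2 n} (hp : projP n l p = p) (s : ℝ)
    (q : EuclideanSpace ℝ (Fin l)) : projP n l (s • p + qEmb n l q) = s • p := by
  conv_rhs => rw [← hp]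
  ext i
  by_cases hi : (i : ℕ) < 2 * n - l
  · simp only [projP, qEmb, PiLp.toLp_apply, PiLp.add_apply, PiLp.smul_apply, hi, if_true,
      dif_neg (not_le.2 hi), add_zero]
  · simp [projP, hi]

theorem pnorm_smul_add_qEmb {p : E2 n} (hp : projP n l p = p) (s : ℝ)
    (q : EuclideanSpace ℝ (Fin l)) : pnorm n l (s • p + qEmb n l q) = |s| * ‖p‖ := by
  rw [pnorm, projP_smul_add_qEmb hp, norm_smul, Real.norm_eq_abs]

theorem qEmb_add_intVec (q : EuclideanSpace ℝ (Fin l)) (m : Fin l → ℤ) :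
    qEmb n l (q + intVec l m) = qEmb n l q + qVec n l m := by
  ext i
  simp only [qEmb, qVec, intVec, PiLp.toLp_apply, PiLp.add_apply]
  split_ifs <;> simp

theorem contDiff_qEmb {k : ℕ∞ω} : ContDiff ℝ k (qEmb n l) := by
  refine contDiff_piLp' (p := 2) fun i => ?_
  simp only [qEmb, PiLp.toLp_apply]
  split_ifs
  · exact contDiff_piLp_apply (p := 2)
  · exact contDiff_const

end Coordinates

theorem unique_radial_scaling_general
    (n l : ℕ)
    (H : E2 n → ℝ) (μ r : ℝ)
    (hH0 : ContDiff ℝ 2 H)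
    (hH1 : ∀ (x : E2 n) (m : Fin l → ℤ), H (x + qVec n l m) = H x)
    (hμ : 0 < μ) (hr : 0 < r)
    (hH2 : ∀ x : E2 n, r ≤ pnorm n l x →
      0 < μ * H x ∧ μ * H x ≤ ⟪gradient H x, projP n l x⟫)
    (M : ℝ) (hM : ∀ x : E2 n, pnorm n l x ≤ r → H x < M)
    (p : E2 n) (hp0 : projP n l p = p) (hpne : p ≠ 0) :
    (∀ q : EuclideanSpace ℝ (Fin l), ∃! s : ℝ, 0 < s ∧ H (s • p + qEmb n l q) = M) ∧
    ∃ σ : EuclideanSpace ℝ (Fin l) → ℝ,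
      ((∀ q, 0 < σ q) ∧ (∀ q, H (σ q • p + qEmb n l q) = M) ∧
        ContDiff ℝ 2 σ ∧ (∀ q (m : Fin l → ℤ), σ (q + intVec l m) = σ q)) ∧
      ∀ σ' : EuclideanSpace ℝ (Fin l) → ℝ,
        ((∀ q, 0 < σ' q) ∧ (∀ q, H (σ' q • p + qEmb n l q) = M)) → σ' = σ := by
  have hp : 0 < ‖p‖ := norm_pos_iff.2 hpne
  set s₀ := r / ‖p‖
  have hs₀ : 0 < s₀ := div_pos hr hp
  have hderiv : ∀ q s, HasDerivAt (fun t => H (t • p + qEmb n l q))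
      ⟪gradient H (s • p + qEmb n l q), p⟫ s := fun q s =>
    (hH0.differentiable (by norm_num) _).hasDerivAt_comp_smul_add
  have hfar : ∀ q s, s₀ ≤ s → 0 < μ * H (s • p + qEmb n l q) ∧
      μ * H (s • p + qEmb n l q) ≤ s * ⟪gradient H (s • p + qEmb n l q), p⟫ := by
    intro q s hs
    have hr_le : r ≤ pnorm n l (s • p + qEmb n l q) := by
      rw [pnorm_smul_add_qEmb hp0, ← div_le_iff₀ hp]
      exact hs.trans (le_abs_self s)
    simpa [projP_smul_add_qEmb hp0, real_inner_smul_right] using hH2 _ hr_le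
  have hpos : ∀ q s, s₀ ≤ s → 0 < H (s • p + qEmb n l q) := fun q s hs =>
    pos_of_mul_pos_right (hfar q s hs).1 hμ.le
  have hnear : ∀ q s, 0 < s → s ≤ s₀ → H (s • p + qEmb n l q) < M := fun q s hs hs' =>
    hM _ (by rwa [pnorm_smul_add_qEmb hp0, abs_of_pos hs, ← le_div_iff₀ hp])
  have hunique : ∀ q, ∃! s : ℝ, 0 < s ∧ H (s • p + qEmb n l q) = M := fun q =>
    existsUnique_pos_eq_of_superhomogeneous hμ hs₀ (fun s _ => hderiv q s) (hpos q)
      (fun s hs => (hfar q s hs).2) (hnear q)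
  choose σ hσ hσ_unique using id hunique
  have hσ_gt : ∀ q, s₀ < σ q := fun q =>
    not_le.1 fun h => (hnear q _ (hσ q).1 h).ne (hσ q).2
  refine ⟨hunique, σ, ⟨fun q => (hσ q).1, fun q => (hσ q).2, ?_, fun q m => ?_⟩,
    fun σ' hσ' => funext fun q => hσ_unique q _ ⟨hσ'.1 q, hσ'.2 q⟩⟩
  · have hG : ContDiff ℝ 2 fun x : EuclideanSpace ℝ (Fin l) × ℝ => H (x.2 • p + qEmb n l x.1) :=
      hH0.comp ((contDiff_snd.smul contDiff_const).add (contDiff_qEmb.comp contDiff_fst))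
    refine contDiff_of_forall_apply_eq_of_unique hG (by norm_num) isOpen_Ioi (fun q => (hσ q).1)
      (fun q => (hσ q).2) (fun q t ht hq => hσ_unique q t ⟨ht, hq⟩) fun q => ?_
    exact isInvertible_fderiv_comp_inr_of_hasDerivAt (hG.differentiable (by norm_num) _)
      (hderiv q (σ q)) (pos_deriv_of_superhomogeneous hμ hs₀ (hpos q)
        (fun s hs => (hfar q s hs).2) (hσ_gt q).le).ne'
  · refine hσ_unique q _ ⟨(hσ (q + intVec l m)).1, ?_⟩
    rw [← hH1 _ m, add_assoc, ← qEmb_add_intVec]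
    exact (hσ _).2

/-- Proposition 2.1(ii): for fixed `p ≠ 0` in the `p`-subspace, for each `q` there is a
unique `s > 0` with `H(s·p, q) = M`; the resulting function `σ` is the unique positive
solution of `H(σ(q)·p, q) = M`, is `C²`, and is `ℤ^ℓ`-periodic. -/
theorem unique_radial_scaling
    (n l : ℕ) (hn : 1 ≤ n) (hl : 1 ≤ l) (hl2 : l ≤ 2*n)
    (H : E2 n → ℝ) (μ r : ℝ)
    (hH0 : ContDiff ℝ 2 H)
    (hH1 : ∀ (x : E2 n) (m : Fin l → ℤ), H (x + qVec n l m) = H x)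
    (hμ : 0 < μ) (hr : 0 < r)
    (hH2 : ∀ x : E2 n, r ≤ pnorm n l x →
      0 < μ * H x ∧ μ * H x ≤ ⟪gradient H x, projP n l x⟫)
    (M : ℝ) (hM : ∀ x : E2 n, pnorm n l x ≤ r → H x < M)
    (p : E2 n) (hp0 : projP n l p = p) (hpne : p ≠ 0) :
    (∀ q : EuclideanSpace ℝ (Fin l), ∃! s : ℝ, 0 < s ∧ H (s • p + qEmb n l q) = M) ∧
    ∃ σ : EuclideanSpace ℝ (Fin l) → ℝ,
      ((∀ q, 0 < σ q) ∧ (∀ q, H (σ q • p + qEmb n l q) = M) ∧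
        ContDiff ℝ 2 σ ∧ (∀ q (m : Fin l → ℤ), σ (q + intVec l m) = σ q)) ∧
      ∀ σ' : EuclideanSpace ℝ (Fin l) → ℝ,
        ((∀ q, 0 < σ' q) ∧ (∀ q, H (σ' q • p + qEmb n l q) = M)) → σ' = σ :=
  unique_radial_scaling_general n l H μ r hH0 hH1 hμ hr hH2 M hM p hp0 hpne
end
end

section
/- Let n ≥ 1, 1 ≤ ℓ ≤ 2n, and let X: R^{2n} → R^{2n} be locally Lipschitz with X(x + (0,m)) = X(x) for all x ∈ R^{2n} and m ∈ Z^ℓ. For i = 1, 2 let cᵢ ∈ R \ {0}, kᵢ ∈ Z^ℓ \ {0}, and let wᵢ: R → R^{2n} be differentiable with wᵢ'(t) = cᵢ·X(wᵢ(t)) and wᵢ(t+1) = wᵢ(t) + (0,kᵢ) for all t ∈ R. If the projected orbits coincide, i.e. w₁(R) + {0}×Z^ℓ = w₂(R) + {0}×Z^ℓ, then k₁ = (c₁/c₂)·k₂; in particular c₁/c₂ is rational and c₁/c₂ = ε·|k₁|/|k₂| for some ε ∈ {1, −1}. -/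
noncomputable section
open scoped RealInnerProductSpace

/-- `z(ℝ) + {0}×ℤ^ℓ`: the orbit saturated by the lattice `{0}×ℤ^ℓ`. -/
def orbitLat (n l : ℕ) (z : ℝ → E2 n) : Set (E2 n) :=
  {y | ∃ (t : ℝ) (m : Fin l → ℤ), y = z t + qVec n l m}

/-!
Solutions of `x' = c X(x)` for different `c` are time reparametrisations of each other, so by
uniqueness of solutions the coincidence of the projected orbits gives `w₁ t = w₂ (λ t + t₀) + (0,m₀)`
with `λ = c₁/c₂`. Hence `w₂` has the two quasi-periods `w₂ (s + 1) = w₂ s + (0,k₂)` and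
`w₂ (s + λ) = w₂ s + (0,k₁)`. Since `s ↦ w₂ s - s • (0,k₂)` is continuous and `1`-periodic, it is
bounded, while it is translated by `(0,k₁) - λ • (0,k₂)` at each step `λ`; so this vector vanishes.
-/

open Set Bornology Filter Topology

section Analysis

variable {E : Type*} [NormedAddCommGroup E] [NormedSpace ℝ E]

theorem LocallyLipschitz.eq_of_hasDerivAt {F : E → E} (hF : LocallyLipschitz F) {f g : ℝ → E}
    (hf : ∀ t, HasDerivAt f (F (f t)) t) (hg : ∀ t, HasDerivAt g (F (g t)) t) {t₀ : ℝ}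
    (h₀ : f t₀ = g t₀) : f = g := by
  have hclosed : IsClosed {t | f t = g t} :=
    isClosed_eq (continuous_iff_continuousAt.2 fun t => (hf t).continuousAt)
      (continuous_iff_continuousAt.2 fun t => (hg t).continuousAt)
  have hopen : IsOpen {t | f t = g t} := by
    refine isOpen_iff_mem_nhds.2 fun t (ht : f t = g t) => ?_
    obtain ⟨K, s, hs, hK⟩ := hF (f t)
    have hfs : ∀ᶠ τ in 𝓝 t, f τ ∈ s := (hf t).continuousAt.preimage_mem_nhds hs
    have hgs : ∀ᶠ τ in 𝓝 t, g τ ∈ s := (hg t).continuousAt.preimage_mem_nhds (ht ▸ hs)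
    exact ODE_solution_unique_of_eventually (v := fun _ => F) (s := fun _ => s)
      (.of_forall fun _ => hK) ((Eventually.of_forall hf).and hfs)
      ((Eventually.of_forall hg).and hgs) ht
  funext t
  have hS : {t | f t = g t} = univ := IsClopen.eq_univ ⟨hclosed, hopen⟩ ⟨t₀, h₀⟩
  exact (hS ▸ mem_univ t : t ∈ {t | f t = g t})

theorem hasDerivAt_comp_mul_add_add {X : E → E} {a : E} (hX : ∀ x, X (x + a) = X x)
    {w : ℝ → E} {c : ℝ} (hw : ∀ t, HasDerivAt w (c • X (w t)) t) (r t₀ t : ℝ) :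
    HasDerivAt (fun t => w (r * t + t₀) + a) ((r * c) • X (w (r * t + t₀) + a)) t := by
  have haff : HasDerivAt (fun t : ℝ => r * t + t₀) r t := by
    simpa using ((hasDerivAt_id t).const_mul r).add_const t₀
  rw [hX, mul_smul]
  exact ((hw _).scomp t haff).add_const a

theorem LocallyLipschitz.eq_comp_mul_add_add {X : E → E} (hX : LocallyLipschitz X) {a : E}
    (hXa : ∀ x, X (x + a) = X x) {w₁ w₂ : ℝ → E} {c₁ c₂ r : ℝ} (hr : r * c₂ = c₁)
    (hw₁ : ∀ t, HasDerivAt w₁ (c₁ • X (w₁ t)) t) (hw₂ : ∀ t, HasDerivAt w₂ (c₂ • X (w₂ t)) t)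
    {t₀ : ℝ} (h₀ : w₁ 0 = w₂ t₀ + a) (t : ℝ) : w₁ t = w₂ (r * t + t₀) + a := by
  have hcX : LocallyLipschitz fun x => c₁ • X x := fun x => by
    obtain ⟨K, s, hs, hK⟩ := hX x
    exact ⟨‖c₁‖₊ * K, s, hs, (lipschitzWith_smul c₁).comp_lipschitzOnWith hK⟩
  have hv := hasDerivAt_comp_mul_add_add hXa hw₂ r t₀
  rw [hr] at hv
  exact congrFun (hcX.eq_of_hasDerivAt hw₁ hv (t₀ := 0) (by simpa using h₀)) t

theorem eq_zero_of_isBounded_range_of_map_add_eq {α : Type*} [AddMonoid α] {h : α → E}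
    (hb : IsBounded (range h)) {a : α} {d : E} (had : ∀ x, h (x + a) = h x + d) : d = 0 := by
  have hiter : ∀ N : ℕ, h (N • a) = h 0 + N • d := by
    intro N
    induction N with
    | zero => simp
    | succ N ih => rw [succ_nsmul, had, ih, succ_nsmul, add_assoc]
  obtain ⟨C, hC⟩ := hb.exists_norm_le
  by_contra hd
  obtain ⟨N, hN⟩ := exists_nat_gt (2 * C / ‖d‖)
  rw [div_lt_iff₀ (norm_pos_iff.2 hd)] at hN
  have hle : (N : ℝ) * ‖d‖ ≤ 2 * C := calc
    (N : ℝ) * ‖d‖ = ‖h (N • a) - h 0‖ := by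
      rw [hiter, add_sub_cancel_left, ← Nat.cast_smul_eq_nsmul ℝ, norm_smul, Real.norm_natCast]
    _ ≤ ‖h (N • a)‖ + ‖h 0‖ := norm_sub_le _ _
    _ ≤ 2 * C := by linarith [hC _ (mem_range_self (N • a)), hC _ (mem_range_self 0)]
  linarith

theorem Continuous.eq_smul_of_map_add_eq {w : ℝ → E} (hw : Continuous w) {p q : E} {c : ℝ}
    (h₁ : ∀ s, w (s + 1) = w s + p) (hc : ∀ s, w (s + c) = w s + q) : q = c • p := by
  set h : ℝ → E := fun s => w s - s • p
  have hper : Function.Periodic h 1 := fun s => by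
    simp only [h, h₁, add_smul, one_smul]; abel
  have hb := hper.isBounded_of_continuous one_ne_zero (hw.sub (continuous_id.smul continuous_const))
  rw [← sub_eq_zero]
  exact eq_zero_of_isBounded_range_of_map_add_eq hb (a := c) fun s => by
    simp only [h, hc, add_smul]; abel

theorem exists_sign_eq_mul_norm_div {u v : E} {r : ℝ} (h : u = r • v) (hv : v ≠ 0) :
    ∃ ε : ℝ, (ε = 1 ∨ ε = -1) ∧ r = ε * (‖u‖ / ‖v‖) := by
  have hr : ‖u‖ / ‖v‖ = |r| := by
    rw [h, norm_smul, Real.norm_eq_abs, mul_div_cancel_right₀ _ (norm_ne_zero_iff.2 hv)]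
  rcases le_or_gt 0 r with hr0 | hr0
  · exact ⟨1, .inl rfl, by rw [hr, abs_of_nonneg hr0, one_mul]⟩
  · exact ⟨-1, .inr rfl, by rw [hr, abs_of_neg hr0]; ring⟩

end Analysis

theorem map_add_eq_of_eq_comp_mul_add_add {G : Type*} [AddCommGroup G] {u w : ℝ → G}
    {r t₀ : ℝ} (hr : r ≠ 0) {a b : G} (hu : ∀ t, u (t + 1) = u t + b)
    (huw : ∀ t, u t = w (r * t + t₀) + a) (s : ℝ) : w (s + r) = w s + b := by
  have h := hu ((s - t₀) / r)
  rw [huw, huw, show r * ((s - t₀) / r) + t₀ = s by field_simp; ring,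
    show r * ((s - t₀) / r + 1) + t₀ = s + r by field_simp; ring] at h
  exact add_right_cancel (h.trans (add_right_comm _ _ _))

section Lattice

variable {n l : ℕ}

theorem qVec_zero : qVec n l 0 = 0 := by
  ext i
  simp [qVec]

theorem self_mem_orbitLat (z : ℝ → E2 n) (t : ℝ) : z t ∈ orbitLat n l z :=
  ⟨t, 0, by rw [qVec_zero, add_zero]⟩

theorem qVec_apply_of_le (hl : l ≤ 2 * n) (m : Fin l → ℤ) (i : Fin l) :
    qVec n l m ⟨2 * n - l + i, by omega⟩ = m i := by
  simp only [qVec, WithLp.ofLp_toLp, dif_pos (Nat.le_add_right _ _), Nat.add_sub_cancel_left]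

theorem intCast_eq_mul_of_qVec_eq_smul (hl : l ≤ 2 * n) {k₁ k₂ : Fin l → ℤ} {r : ℝ}
    (h : qVec n l k₁ = r • qVec n l k₂) (i : Fin l) : (k₁ i : ℝ) = r * k₂ i := by
  have hi := congrArg (· ⟨2 * n - l + i, by omega⟩) h
  rwa [PiLp.smul_apply, qVec_apply_of_le hl, qVec_apply_of_le hl] at hi

theorem intVec_ne_zero {k : Fin l → ℤ} (hk : k ≠ 0) : intVec l k ≠ 0 := by
  obtain ⟨i, hi⟩ := Function.ne_iff.1 hk
  intro h
  have h' := congrArg (· i) h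
  simp only [intVec, PiLp.zero_apply, Int.cast_eq_zero] at h'
  exact hi h'

theorem intVec_eq_smul {k₁ k₂ : Fin l → ℤ} {r : ℝ} (h : ∀ i, (k₁ i : ℝ) = r * k₂ i) :
    intVec l k₁ = r • intVec l k₂ := by
  ext i
  exact h i

end Lattice

theorem coinciding_orbits_proportional_rotation_vectors_general
    (n l : ℕ) (hl2 : l ≤ 2*n)
    (X : E2 n → E2 n) (hXlip : LocallyLipschitz X)
    (hXper : ∀ (x : E2 n) (m : Fin l → ℤ), X (x + qVec n l m) = X x)
    (c₁ c₂ : ℝ) (hc₁ : c₁ ≠ 0) (hc₂ : c₂ ≠ 0)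
    (k₁ k₂ : Fin l → ℤ) (hk₂ : k₂ ≠ 0)
    (w₁ w₂ : ℝ → E2 n)
    (hw₁ : ∀ t : ℝ, HasDerivAt w₁ (c₁ • X (w₁ t)) t)
    (hw₂ : ∀ t : ℝ, HasDerivAt w₂ (c₂ • X (w₂ t)) t)
    (hp₁ : ∀ t : ℝ, w₁ (t + 1) = w₁ t + qVec n l k₁)
    (hp₂ : ∀ t : ℝ, w₂ (t + 1) = w₂ t + qVec n l k₂)
    (horb : orbitLat n l w₁ = orbitLat n l w₂) :
    (∀ i : Fin l, (k₁ i : ℝ) = (c₁ / c₂) * (k₂ i : ℝ)) ∧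
    (∃ q : ℚ, c₁ / c₂ = (q : ℝ)) ∧
    ∃ ε : ℝ, (ε = 1 ∨ ε = -1) ∧
      c₁ / c₂ = ε * (‖intVec l k₁‖ / ‖intVec l k₂‖) := by
  obtain ⟨t₀, m₀, h₀⟩ : w₁ 0 ∈ orbitLat n l w₂ := horb ▸ self_mem_orbitLat w₁ 0
  have hw₁₂ := hXlip.eq_comp_mul_add_add (hXper · m₀) (div_mul_cancel₀ c₁ hc₂) hw₁ hw₂ h₀
  have hshift := map_add_eq_of_eq_comp_mul_add_add (div_ne_zero hc₁ hc₂) hp₁ hw₁₂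
  have hw₂c : Continuous w₂ := continuous_iff_continuousAt.2 fun t => (hw₂ t).continuousAt
  have hk := intCast_eq_mul_of_qVec_eq_smul hl2 (hw₂c.eq_smul_of_map_add_eq hp₂ hshift)
  refine ⟨hk, ?_, exists_sign_eq_mul_norm_div (intVec_eq_smul hk) (intVec_ne_zero hk₂)⟩
  obtain ⟨i, hi⟩ := Function.ne_iff.1 hk₂
  refine ⟨k₁ i / k₂ i, ?_⟩
  rw [Rat.cast_div, Rat.cast_intCast, Rat.cast_intCast, hk i,
    mul_div_cancel_right₀ _ (Int.cast_ne_zero.2 hi)]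

/-- Proposition 4.1: two rotation-type trajectories of rescalings `c₁·X`, `c₂·X` of the
same `ℤ^ℓ`-periodic vector field whose projected orbits coincide have proportional
rotation vectors: `k₁ = (c₁/c₂)·k₂`; in particular `c₁/c₂ ∈ ℚ` and
`c₁/c₂ = ±|k₁|/|k₂|`. -/
theorem coinciding_orbits_proportional_rotation_vectors
    (n l : ℕ) (hn : 1 ≤ n) (hl : 1 ≤ l) (hl2 : l ≤ 2*n)
    (X : E2 n → E2 n) (hXlip : LocallyLipschitz X)
    (hXper : ∀ (x : E2 n) (m : Fin l → ℤ), X (x + qVec n l m) = X x)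
    (c₁ c₂ : ℝ) (hc₁ : c₁ ≠ 0) (hc₂ : c₂ ≠ 0)
    (k₁ k₂ : Fin l → ℤ) (hk₁ : k₁ ≠ 0) (hk₂ : k₂ ≠ 0)
    (w₁ w₂ : ℝ → E2 n)
    (hw₁ : ∀ t : ℝ, HasDerivAt w₁ (c₁ • X (w₁ t)) t)
    (hw₂ : ∀ t : ℝ, HasDerivAt w₂ (c₂ • X (w₂ t)) t)
    (hp₁ : ∀ t : ℝ, w₁ (t + 1) = w₁ t + qVec n l k₁)
    (hp₂ : ∀ t : ℝ, w₂ (t + 1) = w₂ t + qVec n l k₂)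
    (horb : orbitLat n l w₁ = orbitLat n l w₂) :
    (∀ i : Fin l, (k₁ i : ℝ) = (c₁ / c₂) * (k₂ i : ℝ)) ∧
    (∃ q : ℚ, c₁ / c₂ = (q : ℝ)) ∧
    ∃ ε : ℝ, (ε = 1 ∨ ε = -1) ∧
      c₁ / c₂ = ε * (‖intVec l k₁‖ / ‖intVec l k₂‖) :=
  coinciding_orbits_proportional_rotation_vectors_general n l hl2 X hXlip hXper c₁ c₂ hc₁ hc₂ k₁ k₂
    hk₂ w₁ w₂ hw₁ hw₂ hp₁ hp₂ horb
end
end
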